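/- For 1 ≤ n, m ≤ d with n + m ≤ d - 1, the identity U_1^{n-1}·(U_0 - U_1·U_{-1})·U_{-1}^{m-1} = E_{n,m} holds in R^{d×d}; in particular E_{n,m} can be written as a product of d-1 tridiagonal Toeplitz matrices (together with elements of To_d(1)). -/
import Mathlib


/-- The shift matrix `U_t ∈ ℝ^{d×d}`: `(U_t)_{ij} = 1` if `i - j = t`, else `0`. -/
def shiftU (d : ℕ) (t : ℤ) : Matrix (Fin d) (Fin d) ℝ :=
  Matrix.of fun i j => if (i : ℤ) - (j : ℤ) = t then 1 else 0

/-- `E_{n,m}` (1-based positions): 1 in position `(n, m)`, zeros elsewhere. -/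
def matUnit (d : ℕ) (n m : ℤ) : Matrix (Fin d) (Fin d) ℝ :=
  Matrix.of fun i j => if (i : ℤ) + 1 = n ∧ (j : ℤ) + 1 = m then 1 else 0

lemma sum_ind (d : ℕ) (c : ℤ) (f : Fin d → ℝ) :
    ∑ k : Fin d, (if (k : ℤ) = c then f k else 0) =
      if h : 0 ≤ c ∧ c < d then f ⟨c.toNat, by omega⟩ else 0 := by
  split
  case isTrue h =>
    rw [Finset.sum_eq_single (⟨c.toNat, by omega⟩ : Fin d)]
    · simp [Int.toNat_of_nonneg h.1]
    · intro k _ hk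
      rw [if_neg]
      intro hkc
      exact hk (Fin.ext (by simp only []; omega))
    · simp
  case isFalse h =>
    apply Finset.sum_eq_zero
    intro k _
    rw [if_neg]
    intro hkc
    exact h ⟨by omega, by omega⟩

lemma midA (d : ℕ) : shiftU d 0 - shiftU d 1 * shiftU d (-1) = matUnit d 1 1 := by
  ext i j
  simp only [Matrix.sub_apply, Matrix.mul_apply, shiftU, matUnit, Matrix.of_apply,
    ite_mul, one_mul, zero_mul]
  have hsum : (∑ k : Fin d, if (i:ℤ) - k = 1 then (if (k:ℤ) - j = -1 then (1:ℝ) else 0) else 0)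
      = ∑ k : Fin d, (if (k:ℤ) = (i:ℤ) - 1 then (if (i:ℤ) - 1 - j = -1 then (1:ℝ) else 0) else 0) :=
    Finset.sum_congr rfl fun k _ => by split_ifs <;> first | rfl | omega
  rw [hsum, sum_ind]
  have hi := i.isLt
  have hj := j.isLt
  split_ifs <;> norm_num <;> omega

lemma shiftL (d : ℕ) (n m : ℤ) (hn : 1 ≤ n) :
    shiftU d 1 * matUnit d n m = matUnit d (n + 1) m := by
  ext i j
  simp only [Matrix.mul_apply, shiftU, matUnit, Matrix.of_apply, ite_mul, one_mul, zero_mul]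
  have hsum : (∑ k : Fin d, if (i:ℤ) - k = 1 then (if (k:ℤ) + 1 = n ∧ (j:ℤ) + 1 = m then (1:ℝ) else 0) else 0)
      = ∑ k : Fin d, (if (k:ℤ) = (i:ℤ) - 1 then (if (i:ℤ) - 1 + 1 = n ∧ (j:ℤ) + 1 = m then (1:ℝ) else 0) else 0) :=
    Finset.sum_congr rfl fun k _ => by
      split_ifs <;> first | rfl | omega
  rw [hsum, sum_ind]
  have hi := i.isLt
  split_ifs <;> norm_num <;> omega

lemma shiftR (d : ℕ) (n m : ℤ) (hm : 1 ≤ m) :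
    matUnit d n m * shiftU d (-1) = matUnit d n (m + 1) := by
  ext i j
  simp only [Matrix.mul_apply, shiftU, matUnit, Matrix.of_apply, mul_ite, mul_one, mul_zero]
  have hsum : (∑ k : Fin d, if (k:ℤ) - j = -1 then (if (i:ℤ) + 1 = n ∧ (k:ℤ) + 1 = m then (1:ℝ) else 0) else 0)
      = ∑ k : Fin d, (if (k:ℤ) = (j:ℤ) - 1 then (if (i:ℤ) + 1 = n ∧ (j:ℤ) - 1 + 1 = m then (1:ℝ) else 0) else 0) :=
    Finset.sum_congr rfl fun k _ => by
      split_ifs <;> first | rfl | omega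
  rw [hsum, sum_ind]
  have hj := j.isLt
  split_ifs <;> norm_num <;> omega

lemma rightPow (d : ℕ) (n : ℤ) (hn : 1 ≤ n) (b : ℕ) :
    matUnit d n 1 * shiftU d (-1) ^ b = matUnit d n (b + 1) := by
  induction b with
  | zero => simp
  | succ b ih =>
    rw [pow_succ, ← mul_assoc, ih, shiftR d n (b+1) (by omega)]
    norm_cast

lemma sandwich (d : ℕ) (a b : ℕ) :
    shiftU d 1 ^ a * matUnit d 1 1 * shiftU d (-1) ^ b = matUnit d (a + 1) (b + 1) := by
  induction a with
  | zero => simpa using rightPow d 1 (le_refl 1) b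
  | succ a ih =>
    calc shiftU d 1 ^ (a + 1) * matUnit d 1 1 * shiftU d (-1) ^ b
        = shiftU d 1 * (shiftU d 1 ^ a * matUnit d 1 1 * shiftU d (-1) ^ b) := by
          rw [pow_succ']; noncomm_ring
      _ = shiftU d 1 * matUnit d (a + 1) (b + 1) := by rw [ih]
      _ = matUnit d (↑(a + 1) + 1) (↑b + 1) := by
          rw [shiftL d (a + 1) (b + 1) (by omega)]; norm_cast

/-- For `1 ≤ n, m` with `n + m ≤ d - 1`,
`U_1^{n-1} · (U_0 - U_1·U_{-1}) · U_{-1}^{m-1} = E_{n,m}`. -/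
theorem shiftU_pow_sandwich_eq_matUnit (d n m : ℕ) (hn : 1 ≤ n) (hm : 1 ≤ m)
    (hnm : n + m ≤ d - 1) :
    shiftU d 1 ^ (n - 1) * (shiftU d 0 - shiftU d 1 * shiftU d (-1)) *
      shiftU d (-1) ^ (m - 1) = matUnit d n m := by
  rw [midA, sandwich, show ((n - 1 : ℕ) : ℤ) + 1 = (n : ℤ) by omega,
    show ((m - 1 : ℕ) : ℤ) + 1 = (m : ℤ) by omega]
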